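/- If G is a topological groupoid, then the unit space G⁽⁰⁾ is closed in G if and only if G is Hausdorff. -/

import Mathlib

/-- A groupoid in the sense of Renault/Hahn: a set `G` with a set of composable
pairs (encoded by the relation `Comp`), a multiplication defined on composable pairs
(encoded by a total function `mul` whose values on non-composable pairs are irrelevant),
and an inversion `inv`. -/
structure RGroupoid (G : Type*) where
  /-- `Comp α β` means `(α, β) ∈ G⁽²⁾`. -/
  Comp : G → G → Prop
  /-- the multiplication map -/
  mul : G → G → G
  /-- the inversion map -/
  inv : G → G
  inv_inv : ∀ γ, inv (inv γ) = γ
  comp_mul_left : ∀ {α β γ}, Comp α β → Comp β γ → Comp (mul α β) γ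
  comp_mul_right : ∀ {α β γ}, Comp α β → Comp β γ → Comp α (mul β γ)
  mul_assoc : ∀ {α β γ}, Comp α β → Comp β γ → mul (mul α β) γ = mul α (mul β γ)
  comp_inv : ∀ γ, Comp γ (inv γ)
  inv_mul_cancel : ∀ {γ η}, Comp γ η → mul (inv γ) (mul γ η) = η
  mul_inv_cancel : ∀ {γ η}, Comp γ η → mul (mul γ η) (inv η) = γ

namespace RGroupoid

variable {G : Type*} (S : RGroupoid G)

/-- The range map `r(γ) = γγ⁻¹`. -/
def r (γ : G) : G := S.mul γ (S.inv γ)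

/-- The source map `s(γ) = γ⁻¹γ`. -/
def s (γ : G) : G := S.mul (S.inv γ) γ

/-- The unit space `G⁽⁰⁾ = {γ⁻¹γ : γ ∈ G}`. -/
def units : Set G := {x | ∃ γ, S.s γ = x}

end RGroupoid

/-- A topological groupoid: a groupoid with a locally compact topology for which the unit
space is Hausdorff in the relative topology, r, s and inversion are continuous, and
multiplication is continuous on the set of composable pairs with the relative topology. -/
structure IsTopGroupoid {G : Type*} [TopologicalSpace G] (S : RGroupoid G) : Prop where
  locallyCompact : LocallyCompactSpace G
  t2_units : T2Space S.units
  continuous_r : Continuous S.r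
  continuous_s : Continuous S.s
  continuous_inv : Continuous S.inv
  continuous_mul : Continuous fun p : {p : G × G // S.Comp p.1 p.2} => S.mul p.1.1 p.1.2

/-! If `G⁽⁰⁾` is closed and a filter converges to both `α` and `β`, then along it `r(γ)` converges
to `r(α)` and to `r(β)` inside the Hausdorff space `G⁽⁰⁾`, so `(α⁻¹, β)` is composable. Then
`s(γ) = γ⁻¹γ` converges both to `s(α)` and to `α⁻¹β`, which lies in the closed set `G⁽⁰⁾`; hence
`α⁻¹β = s(α)` and `β = α(α⁻¹β) = α s(α) = α`. Conversely, `G⁽⁰⁾` is the fixed-point set of the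
continuous map `s`, closed when `G` is Hausdorff. -/

open Filter Topology

namespace RGroupoid

variable {G : Type*} (S : RGroupoid G)

lemma comp_inv_self (γ : G) : S.Comp (S.inv γ) γ := by
  simpa only [S.inv_inv] using S.comp_inv (S.inv γ)

lemma mul_inv_mul {α β : G} (h : S.Comp (S.inv α) β) : S.mul α (S.mul (S.inv α) β) = β := by
  simpa only [S.inv_inv] using S.inv_mul_cancel h

lemma mul_s (γ : G) : S.mul γ (S.s γ) = γ :=
  S.mul_inv_mul (S.comp_inv_self γ)

lemma comp_s (γ : G) : S.Comp γ (S.s γ) :=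
  S.comp_mul_right (S.comp_inv γ) (S.comp_inv_self γ)

lemma comp_r (γ : G) : S.Comp (S.r γ) γ :=
  S.comp_mul_left (S.comp_inv γ) (S.comp_inv_self γ)

lemma comp_of_s_eq_r {γ η : G} (h : S.s γ = S.r η) : S.Comp γ η := by
  have h' := S.comp_mul_left (h ▸ S.comp_s γ) (S.comp_r η)
  rwa [← h, S.mul_s] at h'

lemma s_inv (γ : G) : S.s (S.inv γ) = S.r γ := by
  rw [s, r, S.inv_inv]

lemma s_mul_s (γ : G) : S.mul (S.s γ) (S.s γ) = S.s γ := by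
  have h := S.mul_assoc (S.comp_inv_self γ) (S.comp_s γ)
  rwa [S.mul_s] at h

lemma s_s (γ : G) : S.s (S.s γ) = S.s γ := by
  have hcomp : S.Comp (S.s γ) (S.s γ) :=
    S.comp_mul_right (S.comp_mul_left (S.comp_inv_self γ) (S.comp_inv γ)) (S.comp_inv_self γ)
  have h := S.inv_mul_cancel hcomp
  rwa [S.s_mul_s] at h

lemma s_mem_units (γ : G) : S.s γ ∈ S.units := ⟨γ, rfl⟩

lemma r_mem_units (γ : G) : S.r γ ∈ S.units := ⟨S.inv γ, S.s_inv γ⟩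

lemma mem_units_iff {x : G} : x ∈ S.units ↔ S.s x = x :=
  ⟨fun ⟨γ, hγ⟩ => hγ ▸ S.s_s γ, fun h => ⟨x, h⟩⟩

lemma isClosed_units [TopologicalSpace G] [T2Space G] (hs : Continuous S.s) :
    IsClosed S.units := by
  rw [show S.units = {x | S.s x = x} from Set.ext fun _ => S.mem_units_iff]
  exact isClosed_eq hs continuous_id

end RGroupoid

theorem tendsto_nhds_unique_of_forall_mem {X ι : Type*} [TopologicalSpace X] {A : Set X}
    [T2Space A] {f : ι → X} (hf : ∀ i, f i ∈ A) {l : Filter ι} [l.NeBot] {x y : X}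
    (hx : x ∈ A) (hy : y ∈ A) (hfx : Tendsto f l (𝓝 x)) (hfy : Tendsto f l (𝓝 y)) : x = y :=
  congrArg Subtype.val <| tendsto_nhds_unique
    (tendsto_subtype_rng.2 hfx : Tendsto (fun i => (⟨f i, hf i⟩ : A)) l (𝓝 ⟨x, hx⟩))
    (tendsto_subtype_rng.2 hfy : Tendsto _ l (𝓝 ⟨y, hy⟩))

namespace IsTopGroupoid

variable {G : Type*} [TopologicalSpace G] {S : RGroupoid G}

theorem tendsto_mul (hS : IsTopGroupoid S) {ι : Type*} {l : Filter ι} {f g : ι → G} {a b : G}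
    (hfg : ∀ i, S.Comp (f i) (g i)) (hab : S.Comp a b)
    (hf : Tendsto f l (𝓝 a)) (hg : Tendsto g l (𝓝 b)) :
    Tendsto (fun i => S.mul (f i) (g i)) l (𝓝 (S.mul a b)) :=
  (hS.continuous_mul.tendsto ⟨(a, b), hab⟩).comp
    (tendsto_subtype_rng.2 (hf.prodMk_nhds hg) :
      Tendsto (fun i => (⟨(f i, g i), hfg i⟩ : {p : G × G // S.Comp p.1 p.2})) l _)

theorem t2Space_of_isClosed_units (hS : IsTopGroupoid S) (hcl : IsClosed S.units) :
    T2Space G := by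
  have := hS.t2_units
  refine t2_iff_nhds.2 fun {α β} hF => ?_
  have hα : 𝓝 α ⊓ 𝓝 β ≤ 𝓝 α := inf_le_left
  have hβ : 𝓝 α ⊓ 𝓝 β ≤ 𝓝 β := inf_le_right
  have hr : S.r α = S.r β :=
    tendsto_nhds_unique_of_forall_mem S.r_mem_units (S.r_mem_units α) (S.r_mem_units β)
      ((hS.continuous_r.tendsto α).mono_left hα) ((hS.continuous_r.tendsto β).mono_left hβ)
  have hcomp : S.Comp (S.inv α) β := S.comp_of_s_eq_r (by rw [S.s_inv, hr])
  have hs : Tendsto S.s (𝓝 α ⊓ 𝓝 β) (𝓝 (S.mul (S.inv α) β)) :=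
    hS.tendsto_mul S.comp_inv_self hcomp
      ((hS.continuous_inv.tendsto α).mono_left hα) (tendsto_id.mono_left hβ)
  have hmem : S.mul (S.inv α) β ∈ S.units :=
    hcl.mem_of_tendsto hs (Eventually.of_forall S.s_mem_units)
  have hsα : S.s α = S.mul (S.inv α) β :=
    tendsto_nhds_unique_of_forall_mem S.s_mem_units (S.s_mem_units α) hmem
      ((hS.continuous_s.tendsto α).mono_left hα) hs
  rw [← S.mul_s α, hsα, S.mul_inv_mul hcomp]

end IsTopGroupoid

/-- In a topological groupoid, the unit space is closed iff the groupoid is Hausdorff. -/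
theorem units_closed_iff_t2 {G : Type*} [TopologicalSpace G] (S : RGroupoid G)
    (hS : IsTopGroupoid S) :
    IsClosed S.units ↔ T2Space G :=
  ⟨hS.t2Space_of_isClosed_units, fun _ => S.isClosed_units hS.continuous_s⟩
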